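/- In every schedule of n jobs on m uniform machines that minimizes Σ_j C_j, the multiset of positional weights of the scheduled jobs consists of the n smallest elements of the multiset { ℓ/V_i : 1 ≤ i ≤ m, 1 ≤ ℓ ≤ n }, and for any two scheduled jobs J_j and J_ℓ whose positional weights satisfy ω_j < ω_ℓ, one has p_j ≥ p_ℓ. -/

import Mathlib

/-- A schedule of a finite set of jobs `J` on `m` uniform machines: each job gets a
machine and a (1-based) position, positions on each machine are pairwise distinct and
the occupied positions on each machine are exactly `1, …, η_i`. -/
structure Schedule (J : Type) (m : ℕ) where
  mach : J → Fin m
  pos : J → ℕ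
  pos_pos : ∀ j, 1 ≤ pos j
  inj : ∀ j j', mach j = mach j' → pos j = pos j' → j = j'
  contiguous : ∀ j, 2 ≤ pos j → ∃ j', mach j' = mach j ∧ pos j' = pos j - 1

namespace Schedule

variable {J : Type} {m : ℕ} [Fintype J]

/-- Number `η_i` of jobs scheduled on machine `i`. -/
def load (σ : Schedule J m) (i : Fin m) : ℕ :=
  (Finset.univ.filter fun j => σ.mach j = i).card

/-- Completion time of job `j`: jobs on a machine of speed `V i` are processed
consecutively from time 0 without idle time. -/
noncomputable def compl (σ : Schedule J m) (p : J → ℝ) (V : Fin m → ℝ) (j : J) : ℝ :=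
  (∑ j' ∈ Finset.univ.filter
      (fun j' => σ.mach j' = σ.mach j ∧ σ.pos j' ≤ σ.pos j), p j') / V (σ.mach j)

/-- Total completion time `Σ_j C_j` of a schedule. -/
noncomputable def totalC (σ : Schedule J m) (p : J → ℝ) (V : Fin m → ℝ) : ℝ :=
  ∑ j, σ.compl p V j

/-- Positional weight of job `j`: `(η_i + 1 - k)/V_i` where `k` is the position of `j`
on its machine `M_i`, which holds `η_i` jobs. -/
noncomputable def pw (σ : Schedule J m) (V : Fin m → ℝ) (j : J) : ℝ :=
  ((σ.load (σ.mach j) : ℝ) + 1 - (σ.pos j : ℝ)) / V (σ.mach j)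

end Schedule

/-- The `n` smallest elements (in non-decreasing order) of the multiset
`{ ℓ/V_i : 1 ≤ i ≤ m, 1 ≤ ℓ ≤ n }` of positional weights. -/
noncomputable def sortedWeights (m n : ℕ) (V : Fin m → ℝ) : List ℝ :=
  (((Finset.univ : Finset (Fin m × Fin n)).val.map
      (fun q => (((q.2 : ℕ) : ℝ) + 1) / V q.1)).sort (· ≤ ·)).take n

/-- The processing times sorted in non-increasing order. -/
noncomputable def sortedProcDesc {n : ℕ} (p : Fin n → ℝ) : List ℝ :=
  (((Finset.univ : Finset (Fin n)).val.map p).sort (· ≤ ·)).reverse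

/-!
Since the job in position `k` of a machine holding `η` jobs contributes its processing time to the
completion times of the `η + 1 - k` jobs from position `k` on, `Σ_j C_j = Σ_j ω_j p_j`.
Exchanging two jobs then shows that `p` is antitone in `ω` in an optimal schedule. Moving the first
job of a machine to the front of machine `i` changes the weight of no other job and gives the
moved job the weight `(η_i + 1) / V_i`; so in an optimal schedule every weight is at most
`(η_i + 1) / V_i` for every `i`. The weights in use are the values `ℓ / V_i` with `ℓ ≤ η_i`, and
every other value `ℓ / V_i` with `ℓ ≤ n` is at least `(η_i + 1) / V_i`, so the weights in use are
the `n` smallest.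
-/

open Finset

theorem Finset.image_eq_Icc_one_card {α : Type*} {s : Finset α} {f : α → ℕ}
    (hinj : Set.InjOn f s) (hf : ∀ a ∈ s, f a ∈ Icc 1 #s) : s.image f = Icc 1 #s :=
  eq_of_subset_of_card_le (image_subset_iff.2 hf) (by simp [card_image_of_injOn hinj])

theorem Finset.filter_update_eq {α β : Type*} [Fintype α] [DecidableEq α] [DecidableEq β]
    (f : α → β) (a : α) (b k : β) :
    univ.filter (fun x ↦ Function.update f a b x = k)
      = if b = k then insert a (univ.filter (f · = k)) else (univ.filter (f · = k)).erase a := by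
  ext x
  by_cases hx : x = a <;> split_ifs <;> simp_all [Function.update_apply]

theorem Finset.coe_take_card_sort_map_univ {α : Type*} [Fintype α] (f : α → ℝ) (s : Finset α)
    (hs : ∀ a ∈ s, ∀ b ∉ s, f a ≤ f b) :
    (((univ.val.map f).sort (· ≤ ·)).take #s : Multiset ℝ) = s.val.map f := by
  classical
  set L := (s.val.map f).sort (· ≤ ·) ++ ((univ \ s).val.map f).sort (· ≤ ·)
  have hperm : L.Perm ((univ.val.map f).sort (· ≤ ·)) := by
    rw [← Multiset.coe_eq_coe, ← Multiset.coe_add, Multiset.sort_eq, Multiset.sort_eq,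
      Multiset.sort_eq, ← Multiset.map_add, sdiff_val,
      add_tsub_cancel_of_le (val_le_iff.2 (subset_univ s))]
  have hsorted : L.Pairwise (· ≤ ·) := by
    refine List.pairwise_append.2 ⟨Multiset.pairwise_sort _ _, Multiset.pairwise_sort _ _, ?_⟩
    simp only [Multiset.mem_sort, Multiset.mem_map, mem_val, mem_sdiff, mem_univ, true_and]
    rintro _ ⟨a, ha, rfl⟩ _ ⟨b, hb, rfl⟩
    exact hs a ha b hb
  rw [← hperm.eq_of_pairwise' hsorted (Multiset.pairwise_sort _ _),
    List.take_left' (by simp), Multiset.sort_eq]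

/-- Slot `(i, k)` is position `k + 1` counted from the end of machine `i`. -/
noncomputable def slotWeight {m n : ℕ} (V : Fin m → ℝ) (q : Fin m × Fin n) : ℝ :=
  (((q.2 : ℕ) : ℝ) + 1) / V q.1

namespace Schedule

variable {J : Type} {m n : ℕ} [Fintype J]

def jobsOn (σ : Schedule J m) (i : Fin m) : Finset J := {j | σ.mach j = i}

@[simp]
theorem mem_jobsOn {σ : Schedule J m} {i : Fin m} {j : J} : j ∈ σ.jobsOn i ↔ σ.mach j = i := by
  simp [jobsOn]

@[simp]
theorem card_jobsOn (σ : Schedule J m) (i : Fin m) : #(σ.jobsOn i) = σ.load i := rfl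

theorem Icc_pos_subset_image (σ : Schedule J m) :
    ∀ k (j : J), σ.pos j = k → Icc 1 k ⊆ (σ.jobsOn (σ.mach j)).image σ.pos
  | 0, _, _ => by simp
  | k + 1, j, hj => by
    intro x hx
    obtain ⟨hx1, hxk⟩ := mem_Icc.1 hx
    rcases hxk.eq_or_lt with rfl | hlt
    · exact mem_image.2 ⟨j, mem_jobsOn.2 rfl, hj⟩
    · obtain ⟨j', hmach, hpos⟩ := σ.contiguous j (by omega)
      rw [← hmach]
      exact σ.Icc_pos_subset_image k j' (by omega) (mem_Icc.2 ⟨hx1, by omega⟩)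

theorem pos_le_load (σ : Schedule J m) (j : J) : σ.pos j ≤ σ.load (σ.mach j) := by
  simpa using (card_le_card (σ.Icc_pos_subset_image _ j rfl)).trans card_image_le

def revPos (σ : Schedule J m) (j : J) : ℕ := σ.load (σ.mach j) + 1 - σ.pos j

theorem revPos_mem_Icc (σ : Schedule J m) (j : J) :
    σ.revPos j ∈ Icc 1 (σ.load (σ.mach j)) := by
  have := σ.pos_pos j
  have := σ.pos_le_load j
  rw [mem_Icc, revPos]
  omega

theorem eq_of_revPos_eq (σ : Schedule J m) {j j' : J} (hmach : σ.mach j = σ.mach j')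
    (hrev : σ.revPos j = σ.revPos j') : j = j' := by
  have := σ.pos_le_load j
  have := σ.pos_le_load j'
  rw [revPos, revPos, hmach] at hrev
  exact σ.inj j j' hmach (by omega)

theorem image_revPos (σ : Schedule J m) (i : Fin m) :
    (σ.jobsOn i).image σ.revPos = Icc 1 (σ.load i) :=
  image_eq_Icc_one_card (fun _ hj _ hj' h ↦ σ.eq_of_revPos_eq
      ((mem_jobsOn.1 hj).trans (mem_jobsOn.1 hj').symm) h)
    fun j hj ↦ by simpa [(mem_jobsOn.1 hj)] using σ.revPos_mem_Icc j

theorem exists_revPos_eq (σ : Schedule J m) {i : Fin m} {k : ℕ} (hk : k ∈ Icc 1 (σ.load i)) :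
    ∃ j, σ.mach j = i ∧ σ.revPos j = k := by
  rw [← σ.image_revPos i] at hk
  simpa using hk

theorem pw_eq_revPos_div (σ : Schedule J m) (V : Fin m → ℝ) (j : J) :
    σ.pw V j = σ.revPos j / V (σ.mach j) := by
  rw [pw, revPos, Nat.cast_sub (by have := σ.pos_le_load j; omega)]
  push_cast
  ring

theorem card_filter_pos_ge (σ : Schedule J m) (j : J) :
    #{j' | σ.mach j = σ.mach j' ∧ σ.pos j ≤ σ.pos j'} = σ.revPos j := by
  have hset : ({j' | σ.mach j = σ.mach j' ∧ σ.pos j ≤ σ.pos j'} : Finset J)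
      = (σ.jobsOn (σ.mach j)).filter (σ.revPos · ≤ σ.revPos j) := by
    ext j'
    simp only [mem_filter, mem_univ, true_and, mem_jobsOn]
    unfold revPos
    have := σ.pos_le_load j
    constructor <;> rintro ⟨h, hle⟩ <;> refine ⟨h.symm, ?_⟩ <;> rw [h] at * <;> omega
  have hinj : Set.InjOn σ.revPos ((σ.jobsOn (σ.mach j)).filter (σ.revPos · ≤ σ.revPos j)) :=
    fun a ha b hb h ↦ σ.eq_of_revPos_eq (by simp_all) h
  rw [hset, ← card_image_of_injOn hinj, ← filter_image (p := (· ≤ σ.revPos j)), image_revPos]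
  have := σ.revPos_mem_Icc j
  rw [mem_Icc] at this
  rw [show (Icc 1 (σ.load (σ.mach j))).filter (· ≤ σ.revPos j) = Icc 1 (σ.revPos j) by
    ext k; simp only [mem_filter, mem_Icc]; omega]
  simp

theorem totalC_eq_sum_pw_mul (σ : Schedule J m) (p : J → ℝ) (V : Fin m → ℝ) :
    σ.totalC p V = ∑ j, σ.pw V j * p j := by
  calc σ.totalC p V
      = ∑ j, ∑ j', if σ.mach j' = σ.mach j ∧ σ.pos j' ≤ σ.pos j
          then p j' / V (σ.mach j') else 0 := by
        refine sum_congr rfl fun j _ ↦ ?_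
        rw [compl, sum_div, sum_filter]
        refine sum_congr rfl fun j' _ ↦ ?_
        split_ifs with h
        · rw [h.1]
        · rfl
    _ = ∑ j', #{j | σ.mach j' = σ.mach j ∧ σ.pos j' ≤ σ.pos j} * (p j' / V (σ.mach j')) := by
        rw [sum_comm]
        simp only [← sum_filter, sum_const, nsmul_eq_mul]
    _ = ∑ j, σ.pw V j * p j := by
        refine sum_congr rfl fun j _ ↦ ?_
        rw [card_filter_pos_ge, pw_eq_revPos_div]
        ring

section ofRevPos

variable (mach : J → Fin m) (r : J → ℕ) (hr : ∀ j, r j ∈ Icc 1 #{j' | mach j' = mach j})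
  (hinj : ∀ j j', mach j = mach j' → r j = r j' → j = j')

def ofRevPos : Schedule J m where
  mach := mach
  pos j := #{j' | mach j' = mach j} + 1 - r j
  pos_pos j := by
    have := mem_Icc.1 (hr j)
    omega
  inj j j' hmach hpos := by
    have hj := mem_Icc.1 (hr j)
    have := mem_Icc.1 (hr j')
    rw [hmach] at hpos hj
    exact hinj j j' hmach (by omega)
  contiguous j h := by
    have hj := mem_Icc.1 (hr j)
    have himage : ({j' | mach j' = mach j} : Finset J).image r = Icc 1 #{j' | mach j' = mach j} :=
      image_eq_Icc_one_card (fun a ha b hb ↦ hinj a b (by simp_all))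
        fun j' hj' ↦ by simpa [(mem_filter.1 hj').2] using hr j'
    obtain ⟨j', hj', hrj'⟩ := mem_image.1 <| show r j + 1 ∈ _ from himage ▸ mem_Icc.2 (by omega)
    refine ⟨j', (mem_filter.1 hj').2, ?_⟩
    rw [(mem_filter.1 hj').2, hrj']
    omega

theorem pw_ofRevPos (V : Fin m → ℝ) (j : J) :
    (ofRevPos mach r hr hinj).pw V j = r j / V (mach j) := by
  have := mem_Icc.1 (hr j)
  change ((#{j' | mach j' = mach j} : ℕ) + 1 - ((#{j' | mach j' = mach j} + 1 - r j : ℕ) : ℝ))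
    / V (mach j) = _
  rw [Nat.cast_sub (by omega)]
  push_cast
  ring

end ofRevPos

def permute (σ : Schedule J m) (e : Equiv.Perm J) : Schedule J m where
  mach := σ.mach ∘ e
  pos := σ.pos ∘ e
  pos_pos j := σ.pos_pos (e j)
  inj _ _ hmach hpos := e.injective (σ.inj _ _ hmach hpos)
  contiguous j h := by
    obtain ⟨j', hmach, hpos⟩ := σ.contiguous (e j) h
    exact ⟨e.symm j', by simpa using hmach, by simpa using hpos⟩

theorem load_permute (σ : Schedule J m) (e : Equiv.Perm J) (i : Fin m) :
    (σ.permute e).load i = σ.load i :=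
  card_equiv e fun j ↦ by simp only [mem_filter, mem_univ, true_and]; rfl

theorem pw_permute (σ : Schedule J m) (e : Equiv.Perm J) (V : Fin m → ℝ) (j : J) :
    (σ.permute e).pw V j = σ.pw V (e j) := by
  rw [pw, pw, load_permute]
  rfl

theorem load_le_card (σ : Schedule J m) (i : Fin m) : σ.load i ≤ Fintype.card J :=
  card_filter_le _ _

def slot (σ : Schedule J m) (hn : Fintype.card J ≤ n) (j : J) : Fin m × Fin n :=
  (σ.mach j, ⟨σ.revPos j - 1, by
    have := mem_Icc.1 (σ.revPos_mem_Icc j)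
    have := σ.load_le_card (σ.mach j)
    omega⟩)

theorem slot_injective (σ : Schedule J m) (hn : Fintype.card J ≤ n) :
    Function.Injective (σ.slot hn) := by
  intro j j' h
  simp only [slot, Prod.mk.injEq, Fin.mk.injEq] at h
  have := (mem_Icc.1 (σ.revPos_mem_Icc j)).1
  have := (mem_Icc.1 (σ.revPos_mem_Icc j')).1
  exact σ.eq_of_revPos_eq h.1 (by omega)

theorem slotWeight_slot (σ : Schedule J m) (hn : Fintype.card J ≤ n) (V : Fin m → ℝ) (j : J) :
    slotWeight V (σ.slot hn j) = σ.pw V j := by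
  have := (mem_Icc.1 (σ.revPos_mem_Icc j)).1
  rw [pw_eq_revPos_div, slotWeight, slot, Nat.cast_sub this]
  push_cast
  ring

theorem load_le_of_notMem_range_slot {σ : Schedule J m} (hn : Fintype.card J ≤ n)
    {q : Fin m × Fin n} (hq : q ∉ Set.range (σ.slot hn)) : σ.load q.1 ≤ q.2 := by
  by_contra! hlt
  obtain ⟨j, hmach, hrev⟩ := σ.exists_revPos_eq (mem_Icc.2 ⟨le_add_self, hlt⟩)
  exact hq ⟨j, Prod.ext hmach (Fin.ext (by simp [slot, hrev]))⟩

def IsOptimal (σ : Schedule J m) (p : J → ℝ) (V : Fin m → ℝ) : Prop :=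
  ∀ τ : Schedule J m, σ.totalC p V ≤ τ.totalC p V

theorem totalC_sub_totalC_of_pw_eq {σ τ : Schedule J m} {p : J → ℝ} {V : Fin m → ℝ} {a : J}
    (h : ∀ j ≠ a, τ.pw V j = σ.pw V j) :
    τ.totalC p V - σ.totalC p V = (τ.pw V a - σ.pw V a) * p a := by
  rw [totalC_eq_sum_pw_mul, totalC_eq_sum_pw_mul, ← sum_sub_distrib,
    Fintype.sum_eq_single a fun j hj ↦ by rw [h j hj, sub_self]]
  ring

variable [DecidableEq J]

section moveFirst

variable (σ : Schedule J m) {j₁ : J} {i : Fin m}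

theorem moveFirst_revPos_mem_Icc (h₁ : σ.revPos j₁ = σ.load (σ.mach j₁)) (hi : σ.mach j₁ ≠ i)
    (j : J) :
    Function.update σ.revPos j₁ (σ.load i + 1) j ∈
      Icc 1 #{j' | Function.update σ.mach j₁ i j' = Function.update σ.mach j₁ i j} := by
  have hj := mem_Icc.1 (σ.revPos_mem_Icc j)
  rw [filter_update_eq, mem_Icc]
  by_cases hjj : j = j₁
  · subst hjj
    simp only [Function.update_self, if_true]
    rw [card_insert_of_notMem (by simpa using hi)]
    exact ⟨by omega, le_rfl⟩
  · simp only [Function.update_of_ne hjj]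
    refine ⟨hj.1, ?_⟩
    split_ifs with hmi
    · exact hj.2.trans (hmi ▸ card_le_card (subset_insert _ _))
    · by_cases hm1 : σ.mach j = σ.mach j₁
      · have hlt : σ.revPos j < σ.load (σ.mach j) :=
          hj.2.lt_of_ne fun h ↦ hjj (σ.eq_of_revPos_eq hm1 (h.trans (by rw [hm1, h₁])))
        rw [card_erase_of_mem (by simpa using hm1.symm)]
        exact Nat.le_sub_one_of_lt hlt
      · rw [erase_eq_of_notMem (by simpa using Ne.symm hm1)]
        exact hj.2

theorem moveFirst_revPos_inj (j j' : J)
    (hmach : Function.update σ.mach j₁ i j = Function.update σ.mach j₁ i j')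
    (hrev : Function.update σ.revPos j₁ (σ.load i + 1) j
      = Function.update σ.revPos j₁ (σ.load i + 1) j') : j = j' := by
  have hlt (k : J) (hmach : i = σ.mach k) (hrev : σ.load i + 1 = σ.revPos k) : False := by
    have := (mem_Icc.1 (σ.revPos_mem_Icc k)).2
    rw [← hmach] at this
    omega
  by_cases hj : j = j₁ <;> by_cases hj' : j' = j₁
  · rw [hj, hj']
  · simp only [hj, Function.update_self, Function.update_of_ne hj'] at hmach hrev
    exact (hlt j' hmach hrev).elim
  · simp only [hj', Function.update_self, Function.update_of_ne hj] at hmach hrev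
    exact (hlt j hmach.symm hrev.symm).elim
  · simp only [Function.update_of_ne hj, Function.update_of_ne hj'] at hmach hrev
    exact σ.eq_of_revPos_eq hmach hrev

variable (h₁ : σ.revPos j₁ = σ.load (σ.mach j₁)) (hi : σ.mach j₁ ≠ i)

/-- Positions counted from the end do not change when the first job of a machine is moved to the
front of another one, except for the moved job. -/
def moveFirst : Schedule J m :=
  ofRevPos _ _ (σ.moveFirst_revPos_mem_Icc h₁ hi) σ.moveFirst_revPos_inj

theorem pw_moveFirst_self (V : Fin m → ℝ) :
    (σ.moveFirst h₁ hi).pw V j₁ = (σ.load i + 1) / V i := by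
  simp [moveFirst, pw_ofRevPos]

theorem pw_moveFirst_of_ne (V : Fin m → ℝ) {j : J} (hj : j ≠ j₁) :
    (σ.moveFirst h₁ hi).pw V j = σ.pw V j := by
  rw [moveFirst, pw_ofRevPos, Function.update_of_ne hj, Function.update_of_ne hj,
    pw_eq_revPos_div]

end moveFirst

section optimal

variable {σ : Schedule J m} {p : J → ℝ} {V : Fin m → ℝ}

theorem totalC_permute_swap_sub {a b : J} (hab : a ≠ b) :
    (σ.permute (Equiv.swap a b)).totalC p V - σ.totalC p V
      = (σ.pw V a - σ.pw V b) * (p b - p a) := by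
  rw [totalC_eq_sum_pw_mul, totalC_eq_sum_pw_mul, ← sum_sub_distrib,
    Fintype.sum_eq_add a b hab fun j hj ↦ by
      rw [pw_permute, Equiv.swap_apply_of_ne_of_ne hj.1 hj.2, sub_self]]
  simp only [pw_permute, Equiv.swap_apply_left, Equiv.swap_apply_right]
  ring

theorem IsOptimal.le_of_pw_lt (hσ : σ.IsOptimal p V) {a b : J} (h : σ.pw V a < σ.pw V b) :
    p b ≤ p a := by
  have hab : a ≠ b := by
    rintro rfl
    exact h.false
  have hswap := totalC_permute_swap_sub (σ := σ) (p := p) (V := V) hab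
  have := hσ (σ.permute (Equiv.swap a b))
  nlinarith

/-- `(σ.load i + 1) / V i` is the weight a job gets when moved to the front of machine `i`. -/
theorem IsOptimal.pw_le_load_add_one_div (hσ : σ.IsOptimal p V) (hp : ∀ j, 0 < p j)
    (hV : ∀ i, 0 < V i) (j : J) (i : Fin m) : σ.pw V j ≤ (σ.load i + 1) / V i := by
  have hj := mem_Icc.1 (σ.revPos_mem_Icc j)
  have hmax : σ.pw V j ≤ σ.load (σ.mach j) / V (σ.mach j) := by
    rw [pw_eq_revPos_div]
    gcongr
    · exact (hV _).le
    · exact hj.2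
  by_cases hji : σ.mach j = i
  · refine hmax.trans ?_
    rw [hji]
    gcongr
    · exact (hV i).le
    · linarith
  · obtain ⟨j₁, hmach₁, hrev₁⟩ := σ.exists_revPos_eq (mem_Icc.2 ⟨hj.1.trans hj.2, le_rfl⟩)
    have h₁ : σ.revPos j₁ = σ.load (σ.mach j₁) := by rw [hrev₁, hmach₁]
    have hi : σ.mach j₁ ≠ i := hmach₁ ▸ hji
    have hdiff := totalC_sub_totalC_of_pw_eq (p := p) fun _ ↦ σ.pw_moveFirst_of_ne h₁ hi V
    rw [pw_moveFirst_self, sub_eq_iff_eq_add] at hdiff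
    have := hσ (σ.moveFirst h₁ hi)
    have hpw₁ : σ.pw V j₁ = σ.load (σ.mach j) / V (σ.mach j) := by
      rw [pw_eq_revPos_div, hrev₁, hmach₁]
    refine hmax.trans (hpw₁ ▸ sub_nonneg.1 (nonneg_of_mul_nonneg_left ?_ (hp j₁)))
    linarith

theorem IsOptimal.coe_take_sort_slotWeight (hσ : σ.IsOptimal p V) (hp : ∀ j, 0 < p j)
    (hV : ∀ i, 0 < V i) (hn : Fintype.card J ≤ n) :
    ((((univ : Finset (Fin m × Fin n)).val.map (slotWeight V)).sort (· ≤ ·)).take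
      (Fintype.card J) : Multiset ℝ) = univ.val.map (σ.pw V) := by
  have key := coe_take_card_sort_map_univ (slotWeight V)
      (univ.map ⟨σ.slot hn, σ.slot_injective hn⟩) <| by
    simp only [mem_map, mem_univ, true_and, Function.Embedding.coeFn_mk, forall_exists_index,
      forall_apply_eq_imp_iff]
    intro j q hq
    rw [slotWeight_slot]
    refine (hσ.pw_le_load_add_one_div hp hV j q.1).trans ?_
    rw [slotWeight]
    gcongr
    · exact (hV _).le
    · exact_mod_cast load_le_of_notMem_range_slot hn (by simpa using hq)
  rw [card_map, card_univ, map_val, Multiset.map_map] at key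
  rw [key]
  simp only [Function.comp_def, Function.Embedding.coeFn_mk, slotWeight_slot]

end optimal

end Schedule

/-- In every schedule minimizing `Σ_j C_j`, the multiset of positional
weights of the scheduled jobs consists of the `n` smallest elements of
`{ ℓ/V_i : 1 ≤ i ≤ m, 1 ≤ ℓ ≤ n }`, and whenever `ω_j < ω_ℓ` one has `p_j ≥ p_ℓ`. -/
theorem optimal_schedule_posWeights_and_antitone
    {m n : ℕ} (p : Fin n → ℝ) (V : Fin m → ℝ)
    (hp : ∀ j, 0 < p j) (hV : ∀ i, 0 < V i)
    (σ : Schedule (Fin n) m)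
    (hopt : ∀ τ : Schedule (Fin n) m, σ.totalC p V ≤ τ.totalC p V) :
    (Finset.univ.val.map (fun j => σ.pw V j)
        = (↑(sortedWeights m n V) : Multiset ℝ)) ∧
    ∀ j ℓ : Fin n, σ.pw V j < σ.pw V ℓ → p ℓ ≤ p j := by
  have hσ : σ.IsOptimal p V := hopt
  refine ⟨?_, fun j ℓ ↦ hσ.le_of_pw_lt⟩
  have h := hσ.coe_take_sort_slotWeight hp hV (Fintype.card_fin n).le
  rw [Fintype.card_fin] at h
  exact h.symm
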